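/- arXiv:1605.02480 — 8 statements merged into one kernel-verified Lean document; each statement's English description precedes it below -/
import Mathlib

section
/- For all positive real numbers a, b and ν ∈ [0,1], with r = min{ν, 1-ν}, one has a^(1-ν) b^ν + r(√a - √b)² ≤ (1-ν)a + νb. -/
open Real Finset

noncomputable def Kc (t : ℝ) : ℝ := (1 + t)^2 / (4 * t)

noncomputable def rseq (ν : ℝ) : ℕ → ℝ
  | 0 => min ν (1 - ν)
  | k + 1 => min (2 * rseq ν k) (1 - 2 * rseq ν k)

noncomputable def mfl (ν : ℝ) (k : ℕ) : ℝ := ⌊(2:ℝ)^k * ν⌋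

theorem stmt0 (a b ν : ℝ) (ha : 0 < a) (hb : 0 < b) (hν : ν ∈ Set.Icc (0:ℝ) 1) :
    a ^ (1 - ν) * b ^ ν + min ν (1 - ν) * (Real.sqrt a - Real.sqrt b)^2 ≤ (1 - ν) * a + ν * b := by
  obtain ⟨h0, h1⟩ := hν
  have hab : Real.sqrt a * Real.sqrt b = Real.sqrt (a * b) := (Real.sqrt_mul ha.le b).symm
  have hsq : (Real.sqrt a - Real.sqrt b)^2 = a + b - 2 * Real.sqrt (a * b) := by
    have ha' := Real.sq_sqrt ha.le
    have hb' := Real.sq_sqrt hb.le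
    nlinarith [hab]
  have hsab : (0:ℝ) ≤ Real.sqrt (a * b) := Real.sqrt_nonneg _
  have hl : ∀ t : ℝ, Real.sqrt (a*b) ^ t = a ^ (t/2) * b ^ (t/2) := by
    intro t
    rw [Real.sqrt_eq_rpow, ← Real.rpow_mul (by positivity),
      show (1/2)*t = t/2 by ring, Real.mul_rpow ha.le hb.le]
  rcases le_total ν (1 - ν) with h | h
  · rw [min_eq_left (by linarith)]
    have key : a ^ (1 - 2*ν) * Real.sqrt (a*b) ^ (2*ν) ≤ (1 - 2*ν) * a + (2*ν) * Real.sqrt (a*b) :=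
      Real.geom_mean_le_arith_mean2_weighted (by linarith) (by linarith) ha.le hsab (by ring)
    rw [hl, show (2*ν)/2 = ν by ring, ← mul_assoc, ← Real.rpow_add ha,
      show 1 - 2*ν + ν = 1 - ν by ring] at key
    rw [hsq]
    linarith
  · rw [min_eq_right (by linarith)]
    have key : b ^ (2*ν - 1) * Real.sqrt (a*b) ^ (2 - 2*ν) ≤
        (2*ν - 1) * b + (2 - 2*ν) * Real.sqrt (a*b) :=
      Real.geom_mean_le_arith_mean2_weighted (by linarith) (by linarith) hb.le hsab (by ring)
    rw [hl, show (2 - 2*ν)/2 = 1 - ν by ring, mul_comm (a ^ (1-ν)) (b ^ (1-ν)),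
      ← mul_assoc, ← Real.rpow_add hb, show 2*ν - 1 + (1 - ν) = ν by ring,
      mul_comm (b ^ ν) (a ^ (1-ν))] at key
    rw [hsq]
    linarith
end

section
/- For all positive real numbers a, b and ν ∈ [0,1], with r = min{ν, 1-ν}, one has (a^(1-ν) b^ν)² + r²(a - b)² ≤ ((1-ν)a + νb)². -/
open Real Finset

theorem stmt1 (a b ν : ℝ) (ha : 0 < a) (hb : 0 < b) (hν : ν ∈ Set.Icc (0:ℝ) 1) :
    (a ^ (1 - ν) * b ^ ν)^2 + (min ν (1 - ν))^2 * (a - b)^2 ≤ ((1 - ν) * a + ν * b)^2 := by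
  obtain ⟨h0, h1⟩ := hν
  have hsq : (a ^ (1 - ν) * b ^ ν)^2 = a ^ (2*(1 - ν)) * b ^ (2*ν) := by
    rw [mul_pow, ← Real.rpow_natCast (a ^ (1-ν)) 2, ← Real.rpow_natCast (b ^ ν) 2,
      ← Real.rpow_mul ha.le, ← Real.rpow_mul hb.le]
    norm_num [mul_comm]
  rcases le_total ν (1 - ν) with hle | hle
  · rw [min_eq_left hle]
    have hkey : a ^ (1 - 2*ν) * b ^ (2*ν) ≤ (1 - 2*ν) * a + (2*ν) * b :=
      Real.geom_mean_le_arith_mean2_weighted (by linarith) (by linarith) ha.le hb.le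
        (by ring)
    have h2 : a ^ (2*(1 - ν)) = a * a ^ (1 - 2*ν) := by
      nth_rewrite 2 [← Real.rpow_one a]
      rw [← Real.rpow_add ha]; ring_nf
    rw [hsq, h2]
    have hb2 : 0 < b ^ (2*ν) := Real.rpow_pos_of_pos hb _
    nlinarith [mul_le_mul_of_nonneg_left hkey ha.le]
  · rw [min_eq_right hle]
    have hkey : a ^ (2 - 2*ν) * b ^ (2*ν - 1) ≤ (2 - 2*ν) * a + (2*ν - 1) * b :=
      Real.geom_mean_le_arith_mean2_weighted (by linarith) (by linarith) ha.le hb.le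
        (by ring)
    have h2 : b ^ (2*ν) = b * b ^ (2*ν - 1) := by
      nth_rewrite 2 [← Real.rpow_one b]
      rw [← Real.rpow_add hb]; ring_nf
    have h3 : 2*(1 - ν) = 2 - 2*ν := by ring
    rw [hsq, h2, h3]
    have ha2 : 0 < a ^ (2 - 2*ν) := Real.rpow_pos_of_pos ha _
    nlinarith [mul_le_mul_of_nonneg_left hkey hb.le]
end

section
/- Let a, b > 0, ν ∈ (0,1), h = b/a, r = min{ν, 1-ν}, r' = min{2r, 1-2r}, and K(t) = (1+t)²/(4t). Then K(√h)^{r'} · a^(1-ν) b^ν ≤ (1-ν)a + νb − r(√a − √b)². -/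
open Real Finset

/-! With `c = √(ab)` and `ν ≤ 1/2`, the right-hand side equals `(1 - 2ν) a + 2ν c`, and
`a^(1-ν) b^ν = a^(1-2ν) c^(2ν)`, so the claim is the Kantorovich-refined Young inequality
`K(c/a)^min(μ, 1-μ) a^(1-μ) c^μ ≤ (1-μ) a + μ c` at `μ = 2ν`; note `c/a = √h`. That inequality
follows from the weighted AM-GM inequality, because for `μ ≤ 1/2`
`K(y/x)^μ x^(1-μ) y^μ = x^(1-2μ) ((x+y)/2)^(2μ)`. The case `ν > 1/2` reduces to `ν < 1/2` by
swapping `a` and `b`, using `K(t⁻¹) = K(t)`. -/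

lemma Kc_div {x y : ℝ} (hx : 0 < x) (hy : 0 < y) : Kc (y / x) = ((x + y) / 2) ^ 2 / (x * y) := by
  unfold Kc
  field_simp
  ring

lemma Kc_inv (t : ℝ) : Kc t⁻¹ = Kc t := by
  rcases eq_or_ne t 0 with rfl | ht
  · simp
  · unfold Kc
    field_simp
    ring

lemma Kc_rpow_mul_weighted_geom_mean {x y μ : ℝ} (hx : 0 < x) (hy : 0 < y) :
    Kc (y / x) ^ μ * (x ^ (1 - μ) * y ^ μ) = x ^ (1 - 2 * μ) * ((x + y) / 2) ^ (2 * μ) := by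
  have hm : 0 < (x + y) / 2 := by positivity
  rw [Kc_div hx hy, div_rpow (by positivity) (by positivity), mul_rpow hx.le hy.le,
    ← rpow_natCast, ← rpow_mul hm.le, show 1 - μ = (1 - 2 * μ) + μ by ring, rpow_add hx]
  push_cast
  field_simp

theorem young_kantorovich_of_le_half {x y μ : ℝ} (hx : 0 < x) (hy : 0 < y) (hμ₀ : 0 ≤ μ)
    (hμ : μ ≤ 1 / 2) : Kc (y / x) ^ μ * (x ^ (1 - μ) * y ^ μ) ≤ (1 - μ) * x + μ * y := by
  rw [Kc_rpow_mul_weighted_geom_mean hx hy]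
  calc x ^ (1 - 2 * μ) * ((x + y) / 2) ^ (2 * μ)
      ≤ (1 - 2 * μ) * x + 2 * μ * ((x + y) / 2) :=
        geom_mean_le_arith_mean2_weighted (by linarith) (by linarith) hx.le (by positivity)
          (by ring)
    _ = (1 - μ) * x + μ * y := by ring

theorem young_kantorovich {x y μ : ℝ} (hx : 0 < x) (hy : 0 < y) (hμ₀ : 0 ≤ μ) (hμ₁ : μ ≤ 1) :
    Kc (y / x) ^ min μ (1 - μ) * (x ^ (1 - μ) * y ^ μ) ≤ (1 - μ) * x + μ * y := by
  rcases le_total μ (1 / 2) with hμ | hμ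
  · rw [min_eq_left (by linarith)]
    exact young_kantorovich_of_le_half hx hy hμ₀ hμ
  · rw [min_eq_right (by linarith), ← Kc_inv, inv_div]
    have := young_kantorovich_of_le_half hy hx (μ := 1 - μ) (by linarith) (by linarith)
    rw [sub_sub_cancel] at this
    linarith [mul_comm (x ^ (1 - μ)) (y ^ μ)]

lemma rpow_two_mul_sqrt_mul {a b : ℝ} (ha : 0 ≤ a) (hb : 0 ≤ b) (ν : ℝ) :
    (√a * √b) ^ (2 * ν) = a ^ ν * b ^ ν := by
  rw [← sqrt_mul ha, rpow_mul (sqrt_nonneg _), rpow_two, sq_sqrt (mul_nonneg ha hb),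
    mul_rpow ha hb]

theorem young_refined_of_le_half {a b ν : ℝ} (ha : 0 < a) (hb : 0 < b) (hν₀ : 0 ≤ ν)
    (hν : ν ≤ 1 / 2) :
    Kc √(b / a) ^ min (2 * ν) (1 - 2 * ν) * (a ^ (1 - ν) * b ^ ν)
      ≤ (1 - ν) * a + ν * b - ν * (√a - √b) ^ 2 := by
  have hsa : 0 < √a := sqrt_pos.mpr ha
  have hyoung := young_kantorovich ha (mul_pos hsa (sqrt_pos.mpr hb)) (μ := 2 * ν)
    (by linarith) (by linarith)
  have hratio : √a * √b / a = √(b / a) := by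
    rw [sqrt_div' _ ha.le]
    field_simp
    rw [sq_sqrt ha.le]
  have hpow : a ^ (1 - 2 * ν) * (√a * √b) ^ (2 * ν) = a ^ (1 - ν) * b ^ ν := by
    rw [rpow_two_mul_sqrt_mul ha.le hb.le, ← mul_assoc, ← rpow_add ha]
    ring_nf
  have hrhs : (1 - 2 * ν) * a + 2 * ν * (√a * √b) = (1 - ν) * a + ν * b - ν * (√a - √b) ^ 2 := by
    linear_combination ν * sq_sqrt ha.le + ν * sq_sqrt hb.le
  rwa [hratio, hpow, hrhs] at hyoung

theorem stmt2 (a b ν : ℝ) (ha : 0 < a) (hb : 0 < b) (hν : ν ∈ Set.Ioo (0:ℝ) 1)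
    (h : ℝ) (hh : h = b / a) (r r' : ℝ) (hr : r = min ν (1 - ν)) (hr' : r' = min (2*r) (1 - 2*r)) :
    Kc (Real.sqrt h) ^ r' * (a ^ (1 - ν) * b ^ ν) ≤ (1 - ν) * a + ν * b - r * (Real.sqrt a - Real.sqrt b)^2 := by
  obtain ⟨hν₀, hν₁⟩ := hν
  subst hh hr' hr
  rcases le_total ν (1 / 2) with hν | hν
  · rw [min_eq_left (show ν ≤ 1 - ν by linarith)]
    exact young_refined_of_le_half ha hb hν₀.le hν
  · rw [min_eq_right (show 1 - ν ≤ ν by linarith)]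
    have hswap := young_refined_of_le_half hb ha (ν := 1 - ν) (by linarith) (by linarith)
    rw [← inv_div, sqrt_inv, Kc_inv, sub_sub_cancel, mul_comm (b ^ ν),
      show (√b - √a) ^ 2 = (√a - √b) ^ 2 by ring] at hswap
    linarith
end

section
/- Let a, b > 0, ν ∈ (0,1), h = b/a, r = min{ν, 1-ν}, R = max{ν, 1-ν}, r' = min{2r, 1-2r}, and K(t) = (1+t)²/(4t). Then (1-ν)a + νb − R(√a − √b)² ≤ K(√h)^{-r'} · a^(1-ν) b^ν. -/
open Real Finset

/-!
With `K(y/x) = ((x+y)/2)² / (xy)`, the quantity `K(y/x)^μ x^(1-μ) y^μ` equals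
`x^(1-2μ) ((x+y)/2)^(2μ)`, so for `μ ≤ 1/2` weighted AM-GM bounds it by `(1-μ)x + μy`.
For `ν ≤ 1/2` the refined Young bound `(1-ν)a + νb - ν(√a-√b)²` is `(1-2ν)a + 2ν√(ab)`, and
the previous inequality applied to `a` and `√(ab)` with weight `2ν` gives
`K(√(b/a))^r' a^(1-ν) b^ν ≤ (1-ν)a + νb - r(√a-√b)²`.
For the reverse inequality, the same bound with `ν` replaced by `1-ν` controls
`u = K^r' a^ν b^(1-ν)` by `νa + (1-ν)b - r(√a-√b)²`, which is `2√(ab)` minus the left-hand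
side (as `r + R = 1`). Since `u · K^(-r') a^(1-ν) b^ν = ab`, AM-GM gives
`2√(ab) ≤ u + K^(-r') a^(1-ν) b^ν`.
-/

lemma Kc_pos {t : ℝ} (ht : 0 < t) : 0 < Kc t := by
  unfold Kc; positivity

lemma rseq_one_sub (ν : ℝ) (k : ℕ) : rseq (1 - ν) k = rseq ν k := by
  induction k with
  | zero => simp only [rseq, sub_sub_cancel, min_comm]
  | succ k ih => simp only [rseq, ih]

lemma Kc_div_rpow_mul_rpow {x y : ℝ} (hx : 0 < x) (hy : 0 < y) (μ : ℝ) :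
    Kc (y / x) ^ μ * (x ^ (1 - μ) * y ^ μ) = x ^ (1 - 2 * μ) * ((x + y) / 2) ^ (2 * μ) := by
  have hK : Kc (y / x) = ((x + y) / 2) ^ (2 : ℝ) / (x * y) := by
    rw [rpow_two]; unfold Kc; field_simp; ring
  have hs : 0 ≤ (x + y) / 2 := by positivity
  have hxμ : 0 < x ^ μ := rpow_pos_of_pos hx μ
  have hyμ : 0 < y ^ μ := rpow_pos_of_pos hy μ
  rw [hK, div_rpow (by positivity) (by positivity), ← rpow_mul hs, mul_rpow hx.le hy.le,
    show 1 - μ = (1 - 2 * μ) + μ by ring, rpow_add hx]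
  field_simp

lemma Kc_div_rpow_mul_rpow_le {x y μ : ℝ} (hx : 0 < x) (hy : 0 < y) (hμ0 : 0 ≤ μ)
    (hμ : μ ≤ 1 / 2) :
    Kc (y / x) ^ μ * (x ^ (1 - μ) * y ^ μ) ≤ (1 - μ) * x + μ * y := by
  rw [Kc_div_rpow_mul_rpow hx hy]
  calc x ^ (1 - 2 * μ) * ((x + y) / 2) ^ (2 * μ)
      ≤ (1 - 2 * μ) * x + 2 * μ * ((x + y) / 2) :=
        geom_mean_le_arith_mean2_weighted (by linarith) (by linarith) hx.le (by positivity)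
          (by ring)
    _ = (1 - μ) * x + μ * y := by ring

lemma Kc_div_rpow_min_mul_rpow_le {x y μ : ℝ} (hx : 0 < x) (hy : 0 < y) (hμ0 : 0 ≤ μ)
    (hμ1 : μ ≤ 1) :
    Kc (y / x) ^ min μ (1 - μ) * (x ^ (1 - μ) * y ^ μ) ≤ (1 - μ) * x + μ * y := by
  rcases le_total μ (1 / 2) with hμ | hμ
  · rw [min_eq_left (by linarith)]
    exact Kc_div_rpow_mul_rpow_le hx hy hμ0 hμ
  · rw [min_eq_right (by linarith), ← Kc_inv, inv_div]
    have := Kc_div_rpow_mul_rpow_le hy hx (μ := 1 - μ) (by linarith) (by linarith)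
    rw [sub_sub_cancel] at this
    linarith

lemma refined_young_Kc_of_le_half {a b ν : ℝ} (ha : 0 < a) (hb : 0 < b) (hν0 : 0 ≤ ν)
    (hν : ν ≤ 1 / 2) :
    Kc √(b / a) ^ rseq ν 1 * (a ^ (1 - ν) * b ^ ν) ≤
      (1 - ν) * a + ν * b - rseq ν 0 * (√a - √b) ^ 2 := by
  have hr : rseq ν 0 = ν := min_eq_left (by linarith)
  have hr' : rseq ν 1 = min (2 * ν) (1 - 2 * ν) := by rw [rseq, hr]
  have hab : 0 < √a * √b := by positivity
  have hratio : √a * √b / a = √(b / a) := by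
    rw [sqrt_div' _ ha.le]
    field_simp
    exact sq_sqrt ha.le
  have hprod : a ^ (1 - 2 * ν) * (√a * √b) ^ (2 * ν) = a ^ (1 - ν) * b ^ ν := by
    rw [← sqrt_mul ha.le, sqrt_eq_rpow, ← rpow_mul (by positivity), mul_rpow ha.le hb.le,
      show 1 / 2 * (2 * ν) = ν by ring, ← mul_assoc, ← rpow_add ha]
    ring_nf
  calc Kc √(b / a) ^ rseq ν 1 * (a ^ (1 - ν) * b ^ ν)
      = Kc (√a * √b / a) ^ min (2 * ν) (1 - 2 * ν) *
          (a ^ (1 - 2 * ν) * (√a * √b) ^ (2 * ν)) := by rw [hratio, hprod, hr']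
    _ ≤ (1 - 2 * ν) * a + 2 * ν * (√a * √b) :=
        Kc_div_rpow_min_mul_rpow_le ha hab (by linarith) (by linarith)
    _ = (1 - ν) * a + ν * b - rseq ν 0 * (√a - √b) ^ 2 := by
        rw [hr]; nlinarith [sq_sqrt ha.le, sq_sqrt hb.le]

lemma refined_young_Kc {a b ν : ℝ} (ha : 0 < a) (hb : 0 < b) (hν0 : 0 ≤ ν) (hν1 : ν ≤ 1) :
    Kc √(b / a) ^ rseq ν 1 * (a ^ (1 - ν) * b ^ ν) ≤
      (1 - ν) * a + ν * b - rseq ν 0 * (√a - √b) ^ 2 := by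
  rcases le_total ν (1 / 2) with hν | hν
  · exact refined_young_Kc_of_le_half ha hb hν0 hν
  · have := refined_young_Kc_of_le_half hb ha (ν := 1 - ν) (by linarith) (by linarith)
    rw [rseq_one_sub, rseq_one_sub, sub_sub_cancel, sqrt_div' _ hb.le, ← inv_div, Kc_inv,
      ← sqrt_div' _ ha.le] at this
    linarith

lemma two_mul_le_add_of_mul_eq_sq {u v s : ℝ} (hu : 0 ≤ u) (hv : 0 ≤ v)
    (h : u * v = s ^ 2) : 2 * s ≤ u + v := by
  nlinarith [sq_nonneg (u - v)]

lemma rpow_mul_rpow_one_sub {x : ℝ} (hx : 0 < x) (ν : ℝ) : x ^ ν * x ^ (1 - ν) = x := by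
  rw [← rpow_add hx, add_sub_cancel, rpow_one]

lemma reverse_young_Kc {a b ν : ℝ} (ha : 0 < a) (hb : 0 < b) (hν0 : 0 ≤ ν) (hν1 : ν ≤ 1) :
    (1 - ν) * a + ν * b - (1 - rseq ν 0) * (√a - √b) ^ 2 ≤
      Kc √(b / a) ^ (-rseq ν 1) * (a ^ (1 - ν) * b ^ ν) := by
  have hK : 0 < Kc √(b / a) := Kc_pos (by positivity)
  have hyoung := refined_young_Kc ha hb (ν := 1 - ν) (by linarith) (by linarith)
  rw [rseq_one_sub, rseq_one_sub, sub_sub_cancel] at hyoung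
  have hprod : Kc √(b / a) ^ rseq ν 1 * (a ^ ν * b ^ (1 - ν)) *
      (Kc √(b / a) ^ (-rseq ν 1) * (a ^ (1 - ν) * b ^ ν)) = (√a * √b) ^ 2 := by
    calc _ = (Kc √(b / a) ^ rseq ν 1 * (Kc √(b / a) ^ rseq ν 1)⁻¹) *
          ((a ^ ν * a ^ (1 - ν)) * (b ^ ν * b ^ (1 - ν))) := by rw [rpow_neg hK.le]; ring
      _ = (√a * √b) ^ 2 := by
        rw [mul_inv_cancel₀ (by positivity), rpow_mul_rpow_one_sub ha, rpow_mul_rpow_one_sub hb,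
          mul_pow, sq_sqrt ha.le, sq_sqrt hb.le, one_mul]
  have hamgm := two_mul_le_add_of_mul_eq_sq (by positivity) (by positivity) hprod
  nlinarith [sq_sqrt ha.le, sq_sqrt hb.le]

theorem stmt3 (a b ν : ℝ) (ha : 0 < a) (hb : 0 < b) (hν : ν ∈ Set.Ioo (0:ℝ) 1)
    (h : ℝ) (hh : h = b / a) (r R r' : ℝ) (hr : r = min ν (1 - ν)) (hR : R = max ν (1 - ν))
    (hr' : r' = min (2*r) (1 - 2*r)) :
    (1 - ν) * a + ν * b - R * (Real.sqrt a - Real.sqrt b)^2 ≤ Kc (Real.sqrt h) ^ (-r') * (a ^ (1 - ν) * b ^ ν) := by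
  have hR_eq : R = 1 - rseq ν 0 := by rw [hR, rseq]; linarith [min_add_max ν (1 - ν)]
  have hr'_eq : r' = rseq ν 1 := by rw [hr', hr]; rfl
  rw [hR_eq, hr'_eq, hh]
  exact reverse_young_Kc ha hb hν.1.le hν.2.le
end

section
/- Let a, b > 0, ν ∈ (0,1), h = b/a, r = min{ν, 1-ν}, R' = max{2r, 1-2r}, and K(t) = (1+t)²/(4t). Then (1-ν)a + νb − r(√a − √b)² ≤ K(√h)^{R'} · a^(1-ν) b^ν. -/
open Real Finset

/-- Bernoulli-type reverse AM-GM: for `p ≥ 1`, `x^p y^(1-p) ≥ p x + (1-p) y`. -/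
lemma bern_aux {x y p : ℝ} (hx : 0 < x) (hy : 0 < y) (hp : 1 ≤ p) :
    p * x + (1 - p) * y ≤ x ^ p * y ^ (1 - p) := by
  have hs : (-1:ℝ) ≤ x / y - 1 := by
    have : 0 < x / y := div_pos hx hy
    linarith
  have hB := one_add_mul_self_le_rpow_one_add hs hp
  have h1 : (1:ℝ) + (x / y - 1) = x / y := by ring
  rw [h1] at hB
  -- hB : 1 + p * (x/y - 1) ≤ (x/y)^p
  have hmul := mul_le_mul_of_nonneg_right hB hy.le
  have hL : (1 + p * (x / y - 1)) * y = p * x + (1 - p) * y := by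
    field_simp
    ring
  have hR : (x / y) ^ p * y = x ^ p * y ^ (1 - p) := by
    rw [Real.div_rpow hx.le hy.le, Real.rpow_sub hy, Real.rpow_one]
    field_simp
  rw [hL, hR] at hmul
  exact hmul

lemma Kc_pow_eq (t p : ℝ) (ht : 0 < t) :
    Kc t ^ p = ((1 + t) / 2) ^ (2 * p) / t ^ p := by
  have h1t : (0:ℝ) < (1 + t) / 2 := by linarith
  have h2 : Kc t = ((1 + t) / 2) ^ (2:ℝ) / t := by
    rw [Real.rpow_two]
    unfold Kc
    field_simp [ht.ne']
    ring
  rw [h2, Real.div_rpow (by positivity) ht.le, ← Real.rpow_mul h1t.le]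

/-- Core scalar reverse Young inequality. -/
lemma core_aux {t μ : ℝ} (ht : 0 < t) (hμ0 : 0 ≤ μ) (hμ1 : μ ≤ 1) :
    (1 - μ) + μ * t ≤ Kc t ^ max μ (1 - μ) * t ^ μ := by
  have h1t : (0:ℝ) < (1 + t) / 2 := by linarith
  rcases le_total μ (1/2) with hc | hc
  · -- max = 1 - μ
    have hmax : max μ (1 - μ) = 1 - μ := max_eq_right (by linarith)
    rw [hmax, Kc_pow_eq _ _ ht]
    have key := bern_aux h1t ht (p := 2 * (1 - μ)) (by linarith)
    have hl : 2 * (1 - μ) * ((1 + t) / 2) + (1 - 2 * (1 - μ)) * t = (1 - μ) + μ * t := by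
      ring
    rw [hl] at key
    have hr : ((1 + t) / 2) ^ (2 * (1 - μ)) * t ^ (1 - 2 * (1 - μ)) =
        ((1 + t) / 2) ^ (2 * (1 - μ)) / t ^ (1 - μ) * t ^ μ := by
      rw [div_mul_eq_mul_div, mul_div_assoc, ← Real.rpow_sub ht]
      ring_nf
    rw [hr] at key
    exact key
  · -- max = μ
    have hmax : max μ (1 - μ) = μ := max_eq_left (by linarith)
    rw [hmax, Kc_pow_eq _ _ ht]
    have key := bern_aux h1t one_pos (p := 2 * μ) (by linarith)
    have hl : 2 * μ * ((1 + t) / 2) + (1 - 2 * μ) * 1 = (1 - μ) + μ * t := by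
      ring
    rw [hl, Real.one_rpow, mul_one] at key
    have hr : ((1 + t) / 2) ^ (2 * μ) = ((1 + t) / 2) ^ (2 * μ) / t ^ μ * t ^ μ := by
      rw [div_mul_cancel₀]
      exact (Real.rpow_pos_of_pos ht μ).ne'
    rw [hr] at key
    exact key

lemma Kc_inv_s4 (t : ℝ) (ht : 0 < t) : Kc (1 / t) = Kc t := by
  unfold Kc
  rw [div_eq_div_iff (by positivity) (by positivity)]
  field_simp
  ring

theorem stmt4 (a b ν : ℝ) (ha : 0 < a) (hb : 0 < b) (hν : ν ∈ Set.Ioo (0:ℝ) 1)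
    (h : ℝ) (hh : h = b / a) (r R' : ℝ) (hr : r = min ν (1 - ν)) (hR' : R' = max (2*r) (1 - 2*r)) :
    (1 - ν) * a + ν * b - r * (Real.sqrt a - Real.sqrt b)^2 ≤ Kc (Real.sqrt h) ^ R' * (a ^ (1 - ν) * b ^ ν) := by
  obtain ⟨hν0, hν1⟩ := hν
  have hsa : (0:ℝ) < Real.sqrt a := Real.sqrt_pos.mpr ha
  have hsb : (0:ℝ) < Real.sqrt b := Real.sqrt_pos.mpr hb
  have ha2 : Real.sqrt a ^ 2 = a := Real.sq_sqrt ha.le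
  have hb2 : Real.sqrt b ^ 2 = b := Real.sq_sqrt hb.le
  rcases le_total ν (1/2) with hc | hc
  · -- r = ν
    have hrν : r = ν := by rw [hr]; exact min_eq_left (by linarith)
    set t : ℝ := Real.sqrt (b / a) with htdef
    have ht : 0 < t := Real.sqrt_pos.mpr (div_pos hb ha)
    have hsh : Real.sqrt h = t := by rw [hh]
    have key := core_aux ht (μ := 2 * ν) (by linarith) (by linarith)
    have key2 := mul_le_mul_of_nonneg_left key ha.le
    have hts : t = Real.sqrt b / Real.sqrt a := by
      rw [htdef, Real.sqrt_div hb.le]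
    -- LHS equality
    have hab : a * (Real.sqrt b / Real.sqrt a) = Real.sqrt a * Real.sqrt b := by
      rw [show a * (Real.sqrt b / Real.sqrt a) = Real.sqrt b * (a / Real.sqrt a) from by
        ring, Real.div_sqrt]
      ring
    have hsq : (Real.sqrt a - Real.sqrt b) ^ 2 = a + b - 2 * (Real.sqrt a * Real.sqrt b) := by
      rw [sub_sq, ha2, hb2]; ring
    have e1 : a * ((1 - 2 * ν) + 2 * ν * t) =
        (1 - ν) * a + ν * b - ν * (Real.sqrt a - Real.sqrt b) ^ 2 := by
      rw [hts]
      linear_combination (2 * ν) * hab + ν * hsq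
    -- RHS equality
    have e3 : t ^ ((2:ℝ) * ν) = b ^ ν / a ^ ν := by
      rw [htdef, Real.sqrt_eq_rpow, ← Real.rpow_mul (div_pos hb ha).le]
      rw [show (1 / 2) * (2 * ν) = ν by ring, Real.div_rpow hb.le ha.le]
    have e4 : a * (Kc t ^ max (2 * ν) (1 - 2 * ν) * t ^ ((2:ℝ) * ν)) =
        Kc t ^ max (2 * ν) (1 - 2 * ν) * (a ^ ((1:ℝ) - ν) * b ^ ν) := by
      rw [e3, Real.rpow_sub ha, Real.rpow_one]
      field_simp
    rw [e1, e4] at key2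
    rw [hsh, hR', hrν]
    exact key2
  · -- r = 1 - ν
    have hrν : r = 1 - ν := by rw [hr]; exact min_eq_right (by linarith)
    set t : ℝ := Real.sqrt (a / b) with htdef
    have ht : 0 < t := Real.sqrt_pos.mpr (div_pos ha hb)
    have hKs : Kc (Real.sqrt h) = Kc t := by
      rw [hh, show b / a = (a / b)⁻¹ by rw [inv_div], Real.sqrt_inv, ← one_div,
        Kc_inv_s4 t ht]
    have key := core_aux ht (μ := 2 * (1 - ν)) (by linarith) (by linarith)
    have key2 := mul_le_mul_of_nonneg_left key hb.le
    have hts : t = Real.sqrt a / Real.sqrt b := by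
      rw [htdef, Real.sqrt_div ha.le]
    -- LHS equality
    have hab : b * (Real.sqrt a / Real.sqrt b) = Real.sqrt a * Real.sqrt b := by
      rw [show b * (Real.sqrt a / Real.sqrt b) = Real.sqrt a * (b / Real.sqrt b) from by
        ring, Real.div_sqrt]
    have hsq : (Real.sqrt a - Real.sqrt b) ^ 2 = a + b - 2 * (Real.sqrt a * Real.sqrt b) := by
      rw [sub_sq, ha2, hb2]; ring
    have e1 : b * ((1 - 2 * (1 - ν)) + 2 * (1 - ν) * t) =
        (1 - ν) * a + ν * b - (1 - ν) * (Real.sqrt a - Real.sqrt b) ^ 2 := by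
      rw [hts]
      linear_combination (2 * (1 - ν)) * hab + (1 - ν) * hsq
    -- RHS equality
    have e3 : t ^ ((2:ℝ) * (1 - ν)) = a ^ ((1:ℝ) - ν) / b ^ ((1:ℝ) - ν) := by
      rw [htdef, Real.sqrt_eq_rpow, ← Real.rpow_mul (div_pos ha hb).le]
      rw [show (1 / 2) * (2 * (1 - ν)) = 1 - ν by ring, Real.div_rpow ha.le hb.le]
    have hbb : b ^ (1:ℝ) / b ^ ((1:ℝ) - ν) = b ^ ν := by
      rw [← Real.rpow_sub hb]; norm_num
    have e4 : b * (Kc t ^ max (2 * (1 - ν)) (1 - 2 * (1 - ν)) * t ^ ((2:ℝ) * (1 - ν))) =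
        Kc t ^ max (2 * (1 - ν)) (1 - 2 * (1 - ν)) * (a ^ ((1:ℝ) - ν) * b ^ ν) := by
      rw [e3, ← hbb, Real.rpow_one]
      field_simp
    rw [e1, e4] at key2
    rw [hKs, hR', hrν]
    exact key2
end

section
/- Let a, b > 0 and 0 < ν ≤ 1/2. Set h = b/a, r = min{2ν, 1-2ν}, r₁ = min{2r, 1-2r}, and K(t) = (1+t)²/(4t). Then (1-ν)a + νb ≤ (1-ν)(√a − √b)² − r((ab)^(1/4) − √b)² + K(h^(1/4))^{-r₁} · a^(1-ν) b^ν. -/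
open Real Finset

lemma Kc_pos_s6 {x : ℝ} (hx : 0 < x) : 0 < Kc x := by
  unfold Kc; positivity

/-- Zuo–Shi–Fujii forward refined Young inequality (scalar form). -/
lemma lemZ (x θ : ℝ) (hx : 0 < x) (h0 : 0 ≤ θ) (h1 : θ ≤ 1) :
    Kc x ^ min θ (1 - θ) * x ^ θ ≤ 1 - θ + θ * x := by
  have hx1 : (0:ℝ) < (1 + x) / 2 := by linarith
  rcases le_total θ (1/2) with hc | hc
  · rw [min_eq_left (by linarith)]
    have e1 : Kc x ^ θ * x ^ θ = ((1 + x) / 2) ^ (2 * θ) := by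
      rw [← Real.mul_rpow (Kc_pos_s6 hx).le hx.le]
      have hKx : Kc x * x = ((1 + x) / 2) ^ (2:ℝ) := by
        rw [show (2:ℝ) = ((2:ℕ):ℝ) by norm_num, Real.rpow_natCast]
        unfold Kc; field_simp; ring
      rw [hKx, ← Real.rpow_mul hx1.le]
    rw [e1]
    have hAG := Real.geom_mean_le_arith_mean2_weighted
      (w₁ := 2 * θ) (w₂ := 1 - 2 * θ) (p₁ := (1 + x) / 2) (p₂ := 1)
      (by linarith) (by linarith) hx1.le zero_le_one (by ring)
    rw [Real.one_rpow, mul_one, mul_one] at hAG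
    linarith
  · rw [min_eq_right (by linarith)]
    have e1 : Kc x ^ (1 - θ) * x ^ θ
        = ((1 + x) / 2) ^ (2 * (1 - θ)) * x ^ (2 * θ - 1) := by
      have hKx : Kc x = ((1 + x) / 2) ^ (2:ℝ) / x := by
        rw [show (2:ℝ) = ((2:ℕ):ℝ) by norm_num, Real.rpow_natCast]
        unfold Kc; rw [div_pow, div_div]; norm_num
      rw [hKx, Real.div_rpow (by positivity) hx.le, ← Real.rpow_mul hx1.le,
        div_mul_eq_mul_div, mul_div_assoc, ← Real.rpow_sub hx]
      rw [show θ - (1 - θ) = 2 * θ - 1 by ring]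
    rw [e1]
    have hAG := Real.geom_mean_le_arith_mean2_weighted
      (w₁ := 2 * (1 - θ)) (w₂ := 2 * θ - 1) (p₁ := (1 + x) / 2) (p₂ := x)
      (by linarith) (by linarith) hx1.le hx.le (by ring)
    nlinarith [hAG]

/-- Second-step forward refined Young inequality. -/
lemma lemF (t l : ℝ) (ht : 0 < t) (h0 : 0 ≤ l) (h1 : l ≤ 1) :
    Kc t ^ min (2 * min l (1 - l)) (1 - 2 * min l (1 - l)) * t ^ (2 * l)
      ≤ 1 - l + l * t^2 - min l (1 - l) * (t - 1)^2 := by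
  rcases le_total l (1/2) with hc | hc
  · rw [min_eq_left (by linarith : l ≤ 1 - l)]
    have hz := lemZ t (2 * l) ht (by linarith) (by linarith)
    have hrw : 1 - l + l * t^2 - l * (t - 1)^2 = 1 - 2 * l + 2 * l * t := by ring
    rw [hrw]
    calc Kc t ^ min (2 * l) (1 - 2 * l) * t ^ (2 * l)
        ≤ 1 - 2 * l + 2 * l * t := by
          have : min (2 * l) (1 - 2 * l) = min (2 * l) (1 - (2 * l)) := by ring_nf
          rw [this]; exact hz
      _ = 1 - 2 * l + 2 * l * t := rfl
  · rw [min_eq_right (by linarith : 1 - l ≤ l)]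
    have htinv : (0:ℝ) < 1 / t := by positivity
    have hz := lemZ (1 / t) (2 - 2 * l) htinv (by linarith) (by linarith)
    have hKinv : Kc (1 / t) = Kc t := by
      unfold Kc; field_simp; ring
    rw [hKinv] at hz
    have hminrw : min (2 * (1 - l)) (1 - 2 * (1 - l)) = min (2 - 2 * l) (1 - (2 - 2 * l)) := by
      ring_nf
    rw [hminrw]
    have hpowrw : t ^ (2 * l) = t ^ (2:ℕ) * (1 / t) ^ (2 - 2 * l) := by
      rw [one_div, Real.inv_rpow ht.le, ← Real.rpow_neg ht.le,
        ← Real.rpow_natCast t 2, ← Real.rpow_add ht]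
      norm_num
    rw [hpowrw]
    have hmul := mul_le_mul_of_nonneg_left hz (by positivity :
      (0:ℝ) ≤ t ^ (2:ℕ))
    calc Kc t ^ min (2 - 2 * l) (1 - (2 - 2 * l)) * (t ^ (2:ℕ) * (1 / t) ^ (2 - 2 * l))
        = t ^ (2:ℕ) * (Kc t ^ min (2 - 2 * l) (1 - (2 - 2 * l)) * (1 / t) ^ (2 - 2 * l)) := by
          ring
      _ ≤ t ^ (2:ℕ) * (1 - (2 - 2 * l) + (2 - 2 * l) * (1 / t)) := hmul
      _ = 1 - l + l * t^2 - (1 - l) * (t - 1)^2 := by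
          field_simp; ring

theorem stmt6 (a b ν : ℝ) (ha : 0 < a) (hb : 0 < b) (hν1 : 0 < ν) (hν2 : ν ≤ 1/2)
    (h : ℝ) (hh : h = b / a) (r r₁ : ℝ) (hr : r = min (2*ν) (1 - 2*ν)) (hr₁ : r₁ = min (2*r) (1 - 2*r)) :
    (1 - ν) * a + ν * b ≤ (1 - ν) * (Real.sqrt a - Real.sqrt b)^2 - r * ((a*b) ^ ((1:ℝ)/4) - Real.sqrt b)^2 + Kc (h ^ ((1:ℝ)/4)) ^ (-r₁) * (a ^ (1 - ν) * b ^ ν) := by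
  subst hh
  have hba : (0:ℝ) < b / a := div_pos hb ha
  set t : ℝ := (b / a) ^ ((1:ℝ)/4) with htdef
  have ht : 0 < t := Real.rpow_pos_of_pos hba _
  set l : ℝ := 1 - 2 * ν with hl
  have hl0 : 0 ≤ l := by rw [hl]; linarith
  have hl1 : l ≤ 1 := by rw [hl]; linarith
  have hrl : min l (1 - l) = r := by
    rw [hr, hl, show 1 - (1 - 2*ν) = 2*ν by ring, min_comm]
  have hKpos : 0 < Kc t := Kc_pos_s6 ht
  -- key forward inequality
  have hF := lemF t l ht hl0 hl1
  rw [hrl, ← hr₁] at hF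
  have hP : 0 < Kc t ^ r₁ * t ^ (2 * l) := by positivity
  -- main scalar bound : (1-u) ≤ 1/P
  have hmain : 1 - (l * (t^2 - 1) - r * (t - 1)^2) ≤ 1 / (Kc t ^ r₁ * t ^ (2 * l)) := by
    rw [le_div_iff₀ hP]
    have h1u : Kc t ^ r₁ * t ^ (2 * l) ≤ 1 + (l * (t^2 - 1) - r * (t - 1)^2) := by
      linarith [hF]
    rcases le_total (1 - (l * (t^2 - 1) - r * (t - 1)^2)) 0 with hc | hc
    · calc (1 - (l * (t^2 - 1) - r * (t - 1)^2)) * (Kc t ^ r₁ * t ^ (2 * l))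
          ≤ 0 := mul_nonpos_of_nonpos_of_nonneg hc hP.le
        _ ≤ 1 := zero_le_one
    · nlinarith [mul_le_mul_of_nonneg_left h1u hc,
        sq_nonneg (l * (t^2 - 1) - r * (t - 1)^2)]
  -- algebraic identities
  have h4 : t ^ (4:ℕ) = b / a := by
    rw [← Real.rpow_natCast t 4, htdef, ← Real.rpow_mul hba.le]
    norm_num
  have hb4 : b = a * t ^ (4:ℕ) := by
    rw [h4]; field_simp
  have hsa : Real.sqrt a ^ 2 = a := Real.sq_sqrt ha.le
  have hsqab : Real.sqrt b = Real.sqrt a * t ^ 2 := by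
    have h2 : t ^ (2:ℕ) = Real.sqrt (b / a) := by
      rw [← Real.rpow_natCast t 2, htdef, ← Real.rpow_mul hba.le,
        Real.sqrt_eq_rpow]
      norm_num
    have hsane : Real.sqrt a ≠ 0 := (Real.sqrt_pos.2 ha).ne'
    rw [h2, Real.sqrt_div hb.le]
    field_simp
  have hq : (a * b) ^ ((1:ℝ)/4) = Real.sqrt a * t := by
    have hab2 : a * b = (a * t ^ 2) ^ (2:ℕ) := by rw [hb4]; ring
    rw [hab2, ← Real.rpow_natCast (a * t ^ 2) 2, ← Real.rpow_mul (by positivity),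
      show ((2:ℕ):ℝ) * ((1:ℝ)/4) = (1:ℝ)/2 by push_cast; norm_num,
      ← Real.sqrt_eq_rpow, Real.sqrt_mul ha.le, Real.sqrt_sq ht.le]
  -- the Kc term identity
  have htν : t ^ ((4:ℝ) * ν) = (b / a) ^ ν := by
    rw [htdef, ← Real.rpow_mul hba.le, show (1:ℝ)/4 * (4 * ν) = ν by ring]
  have hanb : a ^ (1 - ν) * b ^ ν = a * t ^ ((4:ℝ) * ν) := by
    rw [htν, Real.div_rpow hb.le ha.le, Real.rpow_sub ha, Real.rpow_one]
    ring
  have hS : Kc t ^ (-r₁) * (a ^ (1 - ν) * b ^ ν)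
      = a * t ^ 2 / (Kc t ^ r₁ * t ^ (2 * l)) := by
    rw [hanb, Real.rpow_neg hKpos.le, eq_div_iff hP.ne']
    have hKne : Kc t ^ r₁ ≠ 0 := by positivity
    have hexp : t ^ ((4:ℝ) * ν) * t ^ (2 * l) = t ^ (2:ℕ) := by
      rw [← Real.rpow_add ht, hl, show (4:ℝ) * ν + 2 * (1 - 2 * ν) = 2 by ring,
        ← Real.rpow_natCast t 2]
      norm_num
    calc (Kc t ^ r₁)⁻¹ * (a * t ^ ((4:ℝ) * ν)) * (Kc t ^ r₁ * t ^ (2 * l))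
        = ((Kc t ^ r₁)⁻¹ * Kc t ^ r₁) * (a * (t ^ ((4:ℝ) * ν) * t ^ (2 * l))) := by
          ring
      _ = 1 * (a * t ^ (2:ℕ)) := by rw [inv_mul_cancel₀ hKne, hexp]
      _ = a * t ^ 2 := by ring
  -- square identities
  have e1 : (Real.sqrt a - Real.sqrt b)^2 = a * (1 - t^2)^2 := by
    rw [hsqab]; linear_combination (1 - t^2)^2 * hsa
  have e2 : ((a * b) ^ ((1:ℝ)/4) - Real.sqrt b)^2 = a * t^2 * (1 - t)^2 := by
    rw [hq, hsqab]; linear_combination (t^2 * (1 - t)^2) * hsa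
  -- polynomial identity
  have hid : (1 - ν) * a + ν * b
      = (1 - ν) * (a * (1 - t^2)^2) - r * (a * t^2 * (1 - t)^2)
        + a * t^2 * (1 - (l * (t^2 - 1) - r * (t - 1)^2)) := by
    rw [hb4, hl]; ring
  -- chain
  have hchain : a * t^2 * (1 - (l * (t^2 - 1) - r * (t - 1)^2))
      ≤ a * t^2 / (Kc t ^ r₁ * t ^ (2 * l)) := by
    calc a * t^2 * (1 - (l * (t^2 - 1) - r * (t - 1)^2))
        ≤ a * t^2 * (1 / (Kc t ^ r₁ * t ^ (2 * l))) :=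
          mul_le_mul_of_nonneg_left hmain (by positivity)
      _ = a * t^2 / (Kc t ^ r₁ * t ^ (2 * l)) := by ring
  rw [hS, e1, e2, hid]
  linarith [hchain]
end

section
/- Let a, b > 0, ν ∈ (0,1), n ≥ 1, h = b/a, K(t) = (1+t)²/(4t), m_k = ⌊2^k ν⌋, r₀ = min{ν, 1-ν}, r_k = min{2 r_{k-1}, 1 − 2 r_{k-1}}. Then (1-ν)a + νb ≤ K(h^(1/2ⁿ))^{-r_n} · a^(1-ν) b^ν + (√a − √b)² − Σ_{k=0}^{n-1} r_k · [ (a^{m_k/2^k} b^{1 − m_k/2^k})^{1/2} − (a^{(m_k+1)/2^k} b^{1 − (m_k+1)/2^k})^{1/2} ]². -/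
/-!
The refined Young inequality `K(b/a)^{r₀} a^ν b^{1-ν} ≤ νa + (1-ν)b` is weighted AM-GM applied to
`(a+b)/2` and `b` (if `ν ≤ 1/2`) or to `a` and `(a+b)/2`. It is iterated along the doubling map
`ν ↦ fract (2ν)`: with `ε = ⌊2ν⌋`, replacing `(a, b)` by `(√(ab), b)` if `ε = 0` and by `(a, √(ab))`
if `ε = 1` halves the exponent of `b/a` inside `K`, keeps `a^ν b^{1-ν}`, lowers the arithmetic mean
by exactly `r₀ (√a - √b)²`, and shifts the remaining refinement terms by one index.
The reverse inequality follows from `x + y ≥ 2√(xy)` for `x = K^{-r} a^{1-ν} b^ν` and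
`y = K^r a^ν b^{1-ν}`, whose product is `ab`.
-/

open Real Finset

noncomputable def weightedGeomMean (a b t : ℝ) : ℝ := a ^ t * b ^ (1 - t)

section WeightedGeomMean

variable {a b : ℝ}

@[simp] lemma weightedGeomMean_zero : weightedGeomMean a b 0 = b := by
  simp [weightedGeomMean]

@[simp] lemma weightedGeomMean_one : weightedGeomMean a b 1 = a := by
  simp [weightedGeomMean]

lemma weightedGeomMean_pos (ha : 0 < a) (hb : 0 < b) (t : ℝ) : 0 < weightedGeomMean a b t := by
  unfold weightedGeomMean; positivity

lemma weightedGeomMean_half : weightedGeomMean a b (1 / 2) = √a * √b := by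
  rw [weightedGeomMean, sqrt_eq_rpow, sqrt_eq_rpow]; norm_num

lemma weightedGeomMean_mul_one_sub (ha : 0 < a) (hb : 0 < b) (t : ℝ) :
    weightedGeomMean a b t * weightedGeomMean a b (1 - t) = a * b := by
  simp only [weightedGeomMean, sub_sub_cancel, rpow_sub ha, rpow_sub hb, rpow_one]
  field_simp

lemma weightedGeomMean_weightedGeomMean (ha : 0 < a) (hb : 0 < b) (s u t : ℝ) :
    weightedGeomMean (weightedGeomMean a b s) (weightedGeomMean a b u) t =
      weightedGeomMean a b (t * s + (1 - t) * u) := by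
  simp only [weightedGeomMean]
  rw [mul_rpow (by positivity) (by positivity), mul_rpow (by positivity) (by positivity),
    ← rpow_mul ha.le, ← rpow_mul ha.le, ← rpow_mul hb.le, ← rpow_mul hb.le,
    show t * s + (1 - t) * u = s * t + u * (1 - t) by ring,
    show 1 - (s * t + u * (1 - t)) = (1 - s) * t + (1 - u) * (1 - t) by ring,
    rpow_add ha, rpow_add hb]
  ring

lemma weightedGeomMean_div_weightedGeomMean (ha : 0 < a) (hb : 0 < b) (s u : ℝ) :
    weightedGeomMean a b u / weightedGeomMean a b s = (b / a) ^ (s - u) := by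
  simp only [weightedGeomMean, div_rpow hb.le ha.le, rpow_sub ha, rpow_sub hb, rpow_one]
  field_simp

lemma weightedGeomMean_le (ha : 0 ≤ a) (hb : 0 ≤ b) {t : ℝ} (ht₀ : 0 ≤ t) (ht₁ : t ≤ 1) :
    weightedGeomMean a b t ≤ t * a + (1 - t) * b :=
  geom_mean_le_arith_mean2_weighted ht₀ (sub_nonneg.2 ht₁) ha hb (add_sub_cancel t 1)

end WeightedGeomMean

lemma Kc_div_rpow_mul_weightedGeomMean {a b : ℝ} (ha : 0 < a) (hb : 0 < b) (r ν : ℝ) :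
    Kc (b / a) ^ r * weightedGeomMean a b ν =
      ((a + b) / 2) ^ (2 * r) * a ^ (ν - r) * b ^ (1 - ν - r) := by
  have hK : Kc (b / a) = ((a + b) / 2) ^ (2 : ℝ) / (a * b) := by
    rw [rpow_two, Kc]; field_simp; ring
  rw [hK, div_rpow (by positivity) (by positivity), ← rpow_mul (by positivity),
    mul_rpow ha.le hb.le, weightedGeomMean, rpow_sub ha ν r, rpow_sub hb (1 - ν) r]
  field_simp

lemma Kc_div_rpow_rseq_zero_mul_le {a b ν : ℝ} (ha : 0 < a) (hb : 0 < b) (hν : ν ∈ Set.Icc 0 1) :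
    Kc (b / a) ^ rseq ν 0 * weightedGeomMean a b ν ≤ ν * a + (1 - ν) * b := by
  obtain ⟨hν₀, hν₁⟩ := hν
  have hm : 0 ≤ (a + b) / 2 := by positivity
  rw [Kc_div_rpow_mul_weightedGeomMean ha hb]
  rcases le_total ν (1 / 2) with hν' | hν'
  · rw [rseq, min_eq_left (by linarith), sub_self, rpow_zero, mul_one]
    calc ((a + b) / 2) ^ (2 * ν) * b ^ (1 - ν - ν)
        = weightedGeomMean ((a + b) / 2) b (2 * ν) := by rw [weightedGeomMean]; ring_nf
      _ ≤ 2 * ν * ((a + b) / 2) + (1 - 2 * ν) * b :=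
          weightedGeomMean_le hm hb.le (by linarith) (by linarith)
      _ = ν * a + (1 - ν) * b := by ring
  · rw [rseq, min_eq_right (by linarith), sub_self, rpow_zero, mul_one]
    calc ((a + b) / 2) ^ (2 * (1 - ν)) * a ^ (ν - (1 - ν))
        = weightedGeomMean a ((a + b) / 2) (2 * ν - 1) := by
          rw [weightedGeomMean, mul_comm]; ring_nf
      _ ≤ (2 * ν - 1) * a + (1 - (2 * ν - 1)) * ((a + b) / 2) :=
          weightedGeomMean_le ha.le hm (by linarith) (by linarith)
      _ = ν * a + (1 - ν) * b := by ring

section DoublingMap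

variable {ν : ℝ}

lemma floor_two_mul_cases (hν : ν ∈ Set.Ico 0 1) :
    (⌊2 * ν⌋ = 0 ∧ ν < 1 / 2) ∨ (⌊2 * ν⌋ = 1 ∧ 1 / 2 ≤ ν) := by
  obtain ⟨hν₀, hν₁⟩ := hν
  rcases lt_or_ge ν (1 / 2) with h | h
  · exact Or.inl ⟨Int.floor_eq_zero_iff.2 ⟨by linarith, by linarith⟩, h⟩
  · exact Or.inr ⟨Int.floor_eq_iff.2 ⟨by push_cast; linarith, by push_cast; linarith⟩, h⟩

lemma mfl_zero (hν : ν ∈ Set.Ico 0 1) : mfl ν 0 = 0 := by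
  simp [mfl, Int.floor_eq_zero_iff.2 hν]

lemma mfl_succ (ν : ℝ) (k : ℕ) : mfl ν (k + 1) = mfl (Int.fract (2 * ν)) k + 2 ^ k * ⌊2 * ν⌋ := by
  have h : (2 : ℝ) ^ (k + 1) * ν = 2 ^ k * Int.fract (2 * ν) + ((2 ^ k * ⌊2 * ν⌋ : ℤ) : ℝ) := by
    rw [Int.fract]; push_cast; ring
  rw [mfl, h, Int.floor_add_intCast, mfl]
  push_cast; ring

lemma rseq_fract_two_mul (hν : ν ∈ Set.Ico 0 1) (k : ℕ) :
    rseq (Int.fract (2 * ν)) k = rseq ν (k + 1) := by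
  induction k with
  | zero =>
    rw [Int.fract]
    rcases floor_two_mul_cases hν with ⟨hε, hν'⟩ | ⟨hε, hν'⟩ <;>
      simp only [rseq, hε, Int.cast_zero, Int.cast_one]
    · rw [min_eq_left (by linarith : ν ≤ 1 - ν), sub_zero]
    · rw [min_eq_right (by linarith : 1 - ν ≤ ν), min_comm]; ring_nf
  | succ k ih => rw [rseq, ih]; rfl

end DoublingMap

noncomputable def youngRefinement (ν a b : ℝ) (n : ℕ) : ℝ :=
  ∑ k ∈ range n, rseq ν k *
    (√(weightedGeomMean a b (mfl ν k / 2 ^ k)) -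
      √(weightedGeomMean a b ((mfl ν k + 1) / 2 ^ k))) ^ 2

section Refinement

variable {ν a b : ℝ}

lemma youngRefinement_succ (ha : 0 < a) (hb : 0 < b) (hν : ν ∈ Set.Ico 0 1) (n : ℕ) :
    youngRefinement ν a b (n + 1) = rseq ν 0 * (√a - √b) ^ 2 +
      youngRefinement (Int.fract (2 * ν)) (weightedGeomMean a b ((1 + ⌊2 * ν⌋) / 2))
        (weightedGeomMean a b (⌊2 * ν⌋ / 2)) n := by
  rw [youngRefinement, sum_range_succ', add_comm, youngRefinement]
  congr 1
  · rw [mfl_zero hν, sub_sq_comm]; norm_num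
  · refine sum_congr rfl fun k _ => ?_
    simp only [rseq_fract_two_mul hν, weightedGeomMean_weightedGeomMean ha hb, mfl_succ]
    congr 5 <;> field_simp <;> ring

lemma arithMean_doubling_add_rseq_zero_mul (ha : 0 < a) (hb : 0 < b) (hν : ν ∈ Set.Ico 0 1) :
    Int.fract (2 * ν) * weightedGeomMean a b ((1 + ⌊2 * ν⌋) / 2) +
      (1 - Int.fract (2 * ν)) * weightedGeomMean a b (⌊2 * ν⌋ / 2) + rseq ν 0 * (√a - √b) ^ 2 =
      ν * a + (1 - ν) * b := by
  have hsa := sq_sqrt ha.le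
  have hsb := sq_sqrt hb.le
  rw [Int.fract]
  rcases floor_two_mul_cases hν with ⟨hε, hν'⟩ | ⟨hε, hν'⟩ <;>
    simp only [rseq, hε, Int.cast_zero, Int.cast_one]
  · rw [min_eq_left (by linarith), zero_div, add_zero, weightedGeomMean_zero, weightedGeomMean_half]
    linear_combination ν * hsa + ν * hsb
  · rw [min_eq_right (by linarith), one_add_one_eq_two, div_self two_ne_zero, weightedGeomMean_one,
      weightedGeomMean_half]
    linear_combination (1 - ν) * hsa + (1 - ν) * hsb

theorem Kc_rpow_mul_weightedGeomMean_add_youngRefinement_le (n : ℕ) (ha : 0 < a) (hb : 0 < b)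
    (hν : ν ∈ Set.Ico 0 1) :
    Kc ((b / a) ^ ((1 : ℝ) / 2 ^ n)) ^ rseq ν n * weightedGeomMean a b ν + youngRefinement ν a b n ≤
      ν * a + (1 - ν) * b := by
  induction n generalizing ν a b with
  | zero =>
    simpa [youngRefinement] using Kc_div_rpow_rseq_zero_mul_le ha hb (Set.Ico_subset_Icc_self hν)
  | succ n ih =>
    set ε : ℝ := (⌊2 * ν⌋ : ℝ)
    have hfract : Int.fract (2 * ν) ∈ Set.Ico 0 1 := ⟨Int.fract_nonneg _, Int.fract_lt_one _⟩
    have hratio :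
        (weightedGeomMean a b (ε / 2) / weightedGeomMean a b ((1 + ε) / 2)) ^ ((1 : ℝ) / 2 ^ n) =
          (b / a) ^ ((1 : ℝ) / 2 ^ (n + 1)) := by
      rw [weightedGeomMean_div_weightedGeomMean ha hb, ← rpow_mul (div_pos hb ha).le, pow_succ]
      ring_nf
    have hmean :
        weightedGeomMean (weightedGeomMean a b ((1 + ε) / 2)) (weightedGeomMean a b (ε / 2))
          (Int.fract (2 * ν)) = weightedGeomMean a b ν := by
      rw [weightedGeomMean_weightedGeomMean ha hb, Int.fract]
      congr 1
      ring
    have hIH := ih (weightedGeomMean_pos ha hb ((1 + ε) / 2)) (weightedGeomMean_pos ha hb (ε / 2))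
      hfract
    rw [hratio, hmean, rseq_fract_two_mul hν] at hIH
    rw [youngRefinement_succ ha hb hν]
    linarith [arithMean_doubling_add_rseq_zero_mul ha hb hν]

end Refinement

lemma two_mul_sqrt_mul_le_rpow_neg_mul_add_rpow_mul {c x y : ℝ} (hc : 0 < c) (hx : 0 ≤ x)
    (hy : 0 ≤ y) (r : ℝ) : 2 * √(x * y) ≤ c ^ (-r) * x + c ^ r * y := by
  have hp : 0 ≤ c ^ (-r) * x := by positivity
  have hq : 0 ≤ c ^ r * y := by positivity
  have hpq : c ^ (-r) * x * (c ^ r * y) = x * y := by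
    rw [rpow_neg hc.le]; field_simp
  rw [← hpq, sqrt_mul hp, two_mul]
  nlinarith [sq_nonneg (√(c ^ (-r) * x) - √(c ^ r * y)), sq_sqrt hp, sq_sqrt hq]

theorem stmt9_general (a b ν : ℝ) (ha : 0 < a) (hb : 0 < b) (hν : ν ∈ Set.Ioo (0:ℝ) 1)
    (n : ℕ) (h : ℝ) (hh : h = b / a) :
    (1 - ν) * a + ν * b ≤ Kc (h ^ ((1:ℝ)/2^n)) ^ (-(rseq ν n)) * (a ^ (1 - ν) * b ^ ν)
      + (Real.sqrt a - Real.sqrt b)^2 - (∑ k ∈ Finset.range n, rseq ν k * (Real.sqrt (a ^ (mfl ν k / 2^k) * b ^ (1 - mfl ν k / 2^k)) - Real.sqrt (a ^ ((mfl ν k + 1) / 2^k) * b ^ (1 - (mfl ν k + 1) / 2^k)))^2) := by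
  subst hh
  have hrefined :=
    Kc_rpow_mul_weightedGeomMean_add_youngRefinement_le n ha hb (Set.Ioo_subset_Ico_self hν)
  have hamgm := two_mul_sqrt_mul_le_rpow_neg_mul_add_rpow_mul
    (Kc_pos (rpow_pos_of_pos (div_pos hb ha) ((1 : ℝ) / 2 ^ n)))
    (weightedGeomMean_pos ha hb (1 - ν)).le (weightedGeomMean_pos ha hb ν).le (rseq ν n)
  rw [mul_comm (weightedGeomMean a b (1 - ν)), weightedGeomMean_mul_one_sub ha hb,
    sqrt_mul ha.le] at hamgm
  have hsq : (√a - √b) ^ 2 = a + b - 2 * (√a * √b) := by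
    rw [sub_sq, sq_sqrt ha.le, sq_sqrt hb.le]; ring
  rw [show a ^ (1 - ν) * b ^ ν = weightedGeomMean a b (1 - ν) by
    rw [weightedGeomMean, sub_sub_cancel], hsq]
  change _ ≤ _ + _ - youngRefinement ν a b n
  linarith

theorem stmt9 (a b ν : ℝ) (ha : 0 < a) (hb : 0 < b) (hν : ν ∈ Set.Ioo (0:ℝ) 1)
    (n : ℕ) (hn : 1 ≤ n) (h : ℝ) (hh : h = b / a) :
    (1 - ν) * a + ν * b ≤ Kc (h ^ ((1:ℝ)/2^n)) ^ (-(rseq ν n)) * (a ^ (1 - ν) * b ^ ν)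
      + (Real.sqrt a - Real.sqrt b)^2 - (∑ k ∈ Finset.range n, rseq ν k * (Real.sqrt (a ^ (mfl ν k / 2^k) * b ^ (1 - mfl ν k / 2^k)) - Real.sqrt (a ^ ((mfl ν k + 1) / 2^k) * b ^ (1 - (mfl ν k + 1) / 2^k)))^2) :=
  stmt9_general a b ν ha hb hν n h hh
end

section
/- Let a, b > 0, ν ∈ (0,1), n ≥ 1, h = b/a, K(t) = (1+t)²/(4t), m_k = ⌊2^k ν⌋, r₀ = min{ν, 1-ν}, r_k = min{2r_{k-1}, 1−2r_{k-1}}, R_n = 1 − r_n. Define the Heinz mean H_μ(a,b) = (a^(1-μ)b^μ + a^μ b^(1-μ))/2. Then K(h^(1/2ⁿ))^{r_n} H_ν(a,b) ≤ (a+b)/2 − Σ_{k=0}^{n-1} r_k [ H_{m_k/2^k}(a,b) − 2H_{(2m_k+1)/2^{k+1}}(a,b) + H_{(m_k+1)/2^k}(a,b) ] ≤ K(h^(1/2ⁿ))^{R_n} H_ν(a,b). -/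
/-!
For `n = 0` this is Young's inequality with the Kantorovich constant. After normalising `a = 1`
and putting `t = (1 + h) / 2`, so that `K(h) h = t²`, the lower bound is Bernoulli's inequality
`t^(2ν) ≤ 1 + ν (h - 1)` and the upper bound follows from weighted AM-GM for `h` and `t`
(for `ν ≤ 1/2`; the case `ν > 1/2` is the same after swapping `a` and `b`).

The first correction term `r₀ (a - 2√(ab) + b)` turns `(1 - ν) a + ν b` into the weighted
arithmetic mean of `a` and `√(ab)` with weight `2ν` (if `ν < 1/2`), or of `√(ab)` and `b` with
weight `2ν - 1` (if `ν ≥ 1/2`). The remaining terms are exactly the correction terms for that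
new pair, whose ratio is `√h`, so induction on `n` proves the refinement for the weighted
arithmetic and geometric means. The Heinz-mean version is the average of the versions for
`(a, b)` and `(b, a)`, because `K(1/t) = K(t)`.
-/

open Real Finset

noncomputable def geomMean (a b μ : ℝ) : ℝ := a ^ (1 - μ) * b ^ μ

noncomputable def dyadicSecondDiff (f : ℝ → ℝ) (m : ℝ) (k : ℕ) : ℝ :=
  f (m / 2^k) - 2 * f ((2 * m + 1) / 2^(k+1)) + f ((m + 1) / 2^k)

noncomputable def youngRefined (n : ℕ) (a b ν : ℝ) : ℝ :=
  (1 - ν) * a + ν * b -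
    ∑ k ∈ range n, rseq ν k * dyadicSecondDiff (geomMean a b) (mfl ν k) k

lemma Kc_nonneg {t : ℝ} (ht : 0 ≤ t) : 0 ≤ Kc t := by
  unfold Kc; positivity

lemma Kc_mul_eq_sq {h : ℝ} (hh : h ≠ 0) : Kc h * h = ((1 + h) / 2)^2 := by
  unfold Kc
  field_simp
  ring

lemma rseq_eq_rseq_succ {μ ν : ℝ} (h0 : rseq μ 0 = rseq ν 1) (k : ℕ) :
    rseq μ k = rseq ν (k + 1) := by
  induction k with
  | zero => exact h0
  | succ k ih => simp only [rseq, ih]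

lemma mfl_zero_s15 {ν : ℝ} (h0 : 0 ≤ ν) (h1 : ν < 1) : mfl ν 0 = 0 := by
  simp [mfl, Int.floor_eq_zero_iff.2 ⟨h0, h1⟩]

lemma mfl_two_mul (ν : ℝ) (k : ℕ) : mfl (2 * ν) k = mfl ν (k + 1) := by
  simp only [mfl, pow_succ, mul_assoc]

lemma mfl_two_mul_sub_one (ν : ℝ) (k : ℕ) : mfl (2 * ν - 1) k = mfl ν (k + 1) - 2^k := by
  have : (2:ℝ)^k * (2 * ν - 1) = (2:ℝ)^(k+1) * ν - ((2^k : ℤ) : ℝ) := by push_cast; ring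
  simp only [mfl, this, Int.floor_sub_intCast]
  push_cast
  ring

lemma geomMean_zero (a b : ℝ) : geomMean a b 0 = a := by simp [geomMean]

lemma geomMean_one (a b : ℝ) : geomMean a b 1 = b := by simp [geomMean]

lemma geomMean_swap (a b μ : ℝ) : geomMean b a (1 - μ) = geomMean a b μ := by
  rw [geomMean, geomMean, sub_sub_cancel, mul_comm]

lemma geomMean_pos {a b : ℝ} (ha : 0 < a) (hb : 0 < b) (μ : ℝ) : 0 < geomMean a b μ := by
  unfold geomMean; positivity

lemma geomMean_eq_mul_rpow {a b : ℝ} (ha : 0 < a) (hb : 0 ≤ b) (μ : ℝ) :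
    geomMean a b μ = a * (b / a) ^ μ := by
  rw [geomMean, div_rpow hb ha.le, rpow_sub ha, rpow_one]
  field_simp

lemma geomMean_geomMean_left {a b : ℝ} (ha : 0 < a) (hb : 0 ≤ b) (s μ : ℝ) :
    geomMean a (geomMean a b s) μ = geomMean a b (s * μ) := by
  have hc : 0 ≤ a * (b / a) ^ s := by positivity
  simp only [geomMean_eq_mul_rpow ha hb, geomMean_eq_mul_rpow ha hc,
    mul_div_cancel_left₀ _ ha.ne', ← rpow_mul (div_nonneg hb ha.le)]

lemma geomMean_geomMean_right {a b : ℝ} (ha : 0 ≤ a) (hb : 0 < b) (s μ : ℝ) :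
    geomMean (geomMean a b s) b μ = geomMean a b (1 - (1 - s) * (1 - μ)) := by
  rw [← geomMean_swap _ b, ← geomMean_swap a b s, geomMean_geomMean_left hb ha, geomMean_swap]

lemma dyadicSecondDiff_zero_zero (f : ℝ → ℝ) :
    dyadicSecondDiff f 0 0 = f 0 - 2 * f (1 / 2) + f 1 := by
  norm_num [dyadicSecondDiff]

lemma dyadicSecondDiff_comp_half (f : ℝ → ℝ) (m : ℝ) (k : ℕ) :
    dyadicSecondDiff (fun μ => f (μ / 2)) m k = dyadicSecondDiff f m (k + 1) := by
  simp only [dyadicSecondDiff, div_div, ← pow_succ]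

lemma dyadicSecondDiff_comp_half_add_half (f : ℝ → ℝ) (m : ℝ) (k : ℕ) :
    dyadicSecondDiff (fun μ => f ((1 + μ) / 2)) (m - 2^k) k = dyadicSecondDiff f m (k + 1) := by
  have h2k : (2:ℝ)^k ≠ 0 := by positivity
  have e1 : (1 + (m - 2^k) / 2^k) / 2 = m / 2^(k+1) := by field_simp; ring
  have e2 : (1 + (2 * (m - 2^k) + 1) / 2^(k+1)) / 2 = (2 * m + 1) / 2^(k+1+1) := by
    field_simp; ring
  have e3 : (1 + (m - 2^k + 1) / 2^k) / 2 = (m + 1) / 2^(k+1) := by field_simp; ring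
  simp only [dyadicSecondDiff, e1, e2, e3]

lemma dyadicSecondDiff_average (f g : ℝ → ℝ) (m : ℝ) (k : ℕ) :
    dyadicSecondDiff (fun μ => (f μ + g μ) / 2) m k
      = (dyadicSecondDiff f m k + dyadicSecondDiff g m k) / 2 := by
  unfold dyadicSecondDiff; ring

lemma rpow_half_rpow_one_div_two_pow {x : ℝ} (hx : 0 ≤ x) (n : ℕ) :
    (x ^ (1 / 2 : ℝ)) ^ ((1:ℝ) / 2^n) = x ^ ((1:ℝ) / 2^(n+1)) := by
  rw [← rpow_mul hx, pow_succ]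
  ring_nf

lemma young_kantorovich_one {h ν : ℝ} (hh : 0 < h) (hν0 : 0 ≤ ν) (hν : ν ≤ 1 / 2) :
    Kc h ^ ν * h ^ ν ≤ 1 - ν + ν * h ∧ 1 - ν + ν * h ≤ Kc h ^ (1 - ν) * h ^ ν := by
  set t := (1 + h) / 2 with ht
  have htpos : 0 < t := by positivity
  have hKh : ∀ x : ℝ, Kc h ^ x * h ^ x = t ^ (2 * x) := fun x => by
    rw [← mul_rpow (Kc_nonneg hh.le) hh.le, Kc_mul_eq_sq hh.ne', ← rpow_natCast,
      ← rpow_mul htpos.le]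
    norm_num
  constructor
  · rw [hKh, ht, show (1 + h) / 2 = 1 + (h - 1) / 2 by ring]
    linarith [rpow_one_add_le_one_add_mul_self (by linarith : -1 ≤ (h - 1) / 2)
      (by linarith : 0 ≤ 2 * ν) (by linarith : 2 * ν ≤ 1)]
  · -- multiply through by the weighted geometric mean of `h` and `t`, then use AM-GM
    have hw : 0 < h ^ (1 - 2 * ν) * t ^ (2 * ν) := by positivity
    have amgm : h ^ (1 - 2 * ν) * t ^ (2 * ν) ≤ (1 - 2 * ν) * h + 2 * ν * t :=
      geom_mean_le_arith_mean2_weighted (by linarith) (by linarith) hh.le htpos.le (by ring)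
    have hsq : t ^ 2 - (1 - ν + ν * h) * ((1 - 2 * ν) * h + 2 * ν * t)
        = ((1 - 2 * ν) * (t - 1)) ^ 2 := by rw [ht]; ring
    have hrhs : Kc h ^ (1 - ν) * h ^ ν * (h ^ (1 - 2 * ν) * t ^ (2 * ν)) = t ^ 2 := by
      rw [show Kc h ^ (1 - ν) * h ^ ν * (h ^ (1 - 2 * ν) * t ^ (2 * ν))
          = Kc h ^ (1 - ν) * (h ^ ν * h ^ (1 - 2 * ν)) * t ^ (2 * ν) by ring,
        ← rpow_add hh, show ν + (1 - 2 * ν) = 1 - ν by ring, hKh, ← rpow_add htpos,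
        show 2 * (1 - ν) + 2 * ν = (2:ℝ) by ring, rpow_two]
    have hmean : 0 ≤ 1 - ν + ν * h := by nlinarith
    refine le_of_mul_le_mul_right ?_ hw
    calc (1 - ν + ν * h) * (h ^ (1 - 2 * ν) * t ^ (2 * ν))
        ≤ (1 - ν + ν * h) * ((1 - 2 * ν) * h + 2 * ν * t) :=
          mul_le_mul_of_nonneg_left amgm hmean
      _ ≤ t ^ 2 := by linarith [sq_nonneg ((1 - 2 * ν) * (t - 1))]
      _ = _ := hrhs.symm

lemma young_kantorovich_of_le_half_s15 {a b ν : ℝ} (ha : 0 < a) (hb : 0 < b) (hν0 : 0 ≤ ν)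
    (hν : ν ≤ 1 / 2) :
    Kc (b / a) ^ ν * geomMean a b ν ≤ (1 - ν) * a + ν * b ∧
      (1 - ν) * a + ν * b ≤ Kc (b / a) ^ (1 - ν) * geomMean a b ν := by
  obtain ⟨lower, upper⟩ := young_kantorovich_one (div_pos hb ha) hν0 hν
  have hmean : (1 - ν) * a + ν * b = a * (1 - ν + ν * (b / a)) := by field_simp
  rw [hmean, geomMean_eq_mul_rpow ha hb.le, mul_left_comm, mul_left_comm _ a]
  exact ⟨mul_le_mul_of_nonneg_left lower ha.le, mul_le_mul_of_nonneg_left upper ha.le⟩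

lemma young_kantorovich_s15 {a b ν : ℝ} (ha : 0 < a) (hb : 0 < b) (hν0 : 0 ≤ ν)
    (hν1 : ν ≤ 1) :
    Kc (b / a) ^ rseq ν 0 * geomMean a b ν ≤ (1 - ν) * a + ν * b ∧
      (1 - ν) * a + ν * b ≤ Kc (b / a) ^ (1 - rseq ν 0) * geomMean a b ν := by
  rcases le_total ν (1 / 2) with hν | hν
  · rw [rseq, min_eq_left (by linarith)]
    exact young_kantorovich_of_le_half_s15 ha hb hν0 hν
  · have hswap := young_kantorovich_of_le_half_s15 hb ha (by linarith) (by linarith : 1 - ν ≤ 1 / 2)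
    rw [← inv_div, Kc_inv, geomMean_swap, sub_sub_cancel] at hswap
    rw [rseq, min_eq_right (by linarith), sub_sub_cancel]
    constructor <;> linarith [hswap.1, hswap.2]

lemma rseq_two_mul {ν : ℝ} (hν : ν ≤ 1 / 2) (k : ℕ) : rseq (2 * ν) k = rseq ν (k + 1) :=
  rseq_eq_rseq_succ (by simp only [rseq, min_eq_left (by linarith : ν ≤ 1 - ν)]) k

lemma rseq_two_mul_sub_one {ν : ℝ} (hν : 1 / 2 ≤ ν) (k : ℕ) :
    rseq (2 * ν - 1) k = rseq ν (k + 1) := by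
  refine rseq_eq_rseq_succ ?_ k
  simp only [rseq, min_eq_right (by linarith : 1 - ν ≤ ν), min_comm (2 * ν - 1)]
  ring_nf

lemma geomMean_div_left {a b : ℝ} (ha : 0 < a) (hb : 0 ≤ b) (s : ℝ) :
    geomMean a b s / a = (b / a) ^ s := by
  rw [geomMean_eq_mul_rpow ha hb, mul_div_cancel_left₀ _ ha.ne']

lemma div_geomMean_right {a b : ℝ} (ha : 0 ≤ a) (hb : 0 < b) (s : ℝ) :
    b / geomMean a b s = (b / a) ^ (1 - s) := by
  rw [← geomMean_swap, geomMean_eq_mul_rpow hb ha, div_mul_cancel_left₀ hb.ne',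
    ← inv_rpow (div_nonneg ha hb.le), inv_div]

lemma youngRefined_succ {a b ν : ℝ} (h0 : 0 ≤ ν) (h1 : ν < 1) (n : ℕ) :
    youngRefined (n + 1) a b ν
      = (1 - ν) * a + ν * b - rseq ν 0 * (a - 2 * geomMean a b (1 / 2) + b) -
        ∑ k ∈ range n, rseq ν (k + 1) *
          dyadicSecondDiff (geomMean a b) (mfl ν (k + 1)) (k + 1) := by
  rw [youngRefined, sum_range_succ', mfl_zero_s15 h0 h1, dyadicSecondDiff_zero_zero, geomMean_zero,
    geomMean_one]
  ring

lemma youngRefined_succ_of_le_half {a b ν : ℝ} (ha : 0 < a) (hb : 0 ≤ b) (h0 : 0 ≤ ν)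
    (hν : ν ≤ 1 / 2) (n : ℕ) :
    youngRefined (n + 1) a b ν = youngRefined n a (geomMean a b (1 / 2)) (2 * ν) := by
  have hG : geomMean a (geomMean a b (1 / 2)) = fun μ => geomMean a b (μ / 2) :=
    funext fun μ => by rw [geomMean_geomMean_left ha hb]; ring_nf
  rw [youngRefined_succ h0 (by linarith), youngRefined, hG, rseq, min_eq_left (by linarith)]
  simp only [rseq_two_mul hν, mfl_two_mul, dyadicSecondDiff_comp_half]
  ring

lemma youngRefined_succ_of_half_le {a b ν : ℝ} (ha : 0 ≤ a) (hb : 0 < b) (hν : 1 / 2 ≤ ν)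
    (h1 : ν < 1) (n : ℕ) :
    youngRefined (n + 1) a b ν = youngRefined n (geomMean a b (1 / 2)) b (2 * ν - 1) := by
  have hG : geomMean (geomMean a b (1 / 2)) b = fun μ => geomMean a b ((1 + μ) / 2) :=
    funext fun μ => by rw [geomMean_geomMean_right ha hb]; ring_nf
  rw [youngRefined_succ (by linarith) h1, youngRefined, hG, rseq, min_eq_right (by linarith)]
  simp only [rseq_two_mul_sub_one hν, mfl_two_mul_sub_one, dyadicSecondDiff_comp_half_add_half]
  ring

theorem youngRefined_kantorovich (n : ℕ) {a b ν : ℝ} (ha : 0 < a) (hb : 0 < b) (h0 : 0 ≤ ν)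
    (h1 : ν < 1) :
    Kc ((b / a) ^ ((1:ℝ) / 2^n)) ^ rseq ν n * geomMean a b ν ≤ youngRefined n a b ν ∧
      youngRefined n a b ν ≤
        Kc ((b / a) ^ ((1:ℝ) / 2^n)) ^ (1 - rseq ν n) * geomMean a b ν := by
  induction n generalizing a b ν with
  | zero => simpa [youngRefined] using young_kantorovich_s15 ha hb h0 h1.le
  | succ n ih =>
    have hc := geomMean_pos ha hb (1 / 2)
    rcases lt_or_ge ν (1 / 2) with hν | hν
    · have hG : geomMean a (geomMean a b (1 / 2)) (2 * ν) = geomMean a b ν := by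
        rw [geomMean_geomMean_left ha hb.le]; ring_nf
      have := ih (ν := 2 * ν) ha hc (by linarith) (by linarith)
      rwa [geomMean_div_left ha hb.le, rpow_half_rpow_one_div_two_pow (div_nonneg hb.le ha.le),
        rseq_two_mul hν.le, hG, ← youngRefined_succ_of_le_half ha hb.le h0 hν.le] at this
    · have hG : geomMean (geomMean a b (1 / 2)) b (2 * ν - 1) = geomMean a b ν := by
        rw [geomMean_geomMean_right ha.le hb]; ring_nf
      have := ih (ν := 2 * ν - 1) hc hb (by linarith) (by linarith)
      rwa [div_geomMean_right ha.le hb, show (1:ℝ) - 1 / 2 = 1 / 2 by norm_num,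
        rpow_half_rpow_one_div_two_pow (div_nonneg hb.le ha.le), rseq_two_mul_sub_one hν, hG,
        ← youngRefined_succ_of_half_le ha.le hb hν h1] at this

lemma youngRefined_add_swap (n : ℕ) (a b ν : ℝ) :
    (youngRefined n a b ν + youngRefined n b a ν) / 2 = (a + b) / 2 -
      ∑ k ∈ range n, rseq ν k *
        dyadicSecondDiff (fun μ => (geomMean a b μ + geomMean b a μ) / 2) (mfl ν k) k := by
  have hsum : ∑ k ∈ range n, rseq ν k *
        dyadicSecondDiff (fun μ => (geomMean a b μ + geomMean b a μ) / 2) (mfl ν k) k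
      = (∑ k ∈ range n, rseq ν k * dyadicSecondDiff (geomMean a b) (mfl ν k) k
        + ∑ k ∈ range n, rseq ν k * dyadicSecondDiff (geomMean b a) (mfl ν k) k) / 2 := by
    rw [← sum_add_distrib, sum_div]
    refine sum_congr rfl fun k _ => ?_
    rw [dyadicSecondDiff_average]
    ring
  rw [hsum, youngRefined, youngRefined]
  ring

theorem stmt15_general (a b ν : ℝ) (ha : 0 < a) (hb : 0 < b) (hν : ν ∈ Set.Ioo (0:ℝ) 1)
    (n : ℕ) (h : ℝ) (hh : h = b / a) (H : ℝ → ℝ)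
    (hH : H = (fun μ : ℝ => (a ^ (1 - μ) * b ^ μ + a ^ μ * b ^ (1 - μ)) / 2)) :
    Kc (h ^ ((1:ℝ)/2^n)) ^ rseq ν n * H ν ≤ (a + b) / 2 - (∑ k ∈ Finset.range n, rseq ν k * (H (mfl ν k / 2^k) - 2 * H ((2 * mfl ν k + 1) / 2^(k+1)) + H ((mfl ν k + 1) / 2^k))) ∧
    (a + b) / 2 - (∑ k ∈ Finset.range n, rseq ν k * (H (mfl ν k / 2^k) - 2 * H ((2 * mfl ν k + 1) / 2^(k+1)) + H ((mfl ν k + 1) / 2^k))) ≤ Kc (h ^ ((1:ℝ)/2^n)) ^ (1 - rseq ν n) * H ν := by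
  obtain ⟨hν0, hν1⟩ := hν
  have hHeinz : H = fun μ => (geomMean a b μ + geomMean b a μ) / 2 := by
    rw [hH]; funext μ; simp only [geomMean]; ring
  have hK : Kc ((a / b) ^ ((1:ℝ) / 2^n)) = Kc (h ^ ((1:ℝ) / 2^n)) := by
    rw [hh, ← inv_div, inv_rpow (div_nonneg hb.le ha.le), Kc_inv]
  obtain ⟨lower_ab, upper_ab⟩ := youngRefined_kantorovich n ha hb hν0.le hν1
  obtain ⟨lower_ba, upper_ba⟩ := youngRefined_kantorovich n hb ha hν0.le hν1
  rw [← hh] at lower_ab upper_ab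
  rw [hK] at lower_ba upper_ba
  have hsum := youngRefined_add_swap n a b ν
  rw [← hHeinz] at hsum
  simp only [dyadicSecondDiff] at hsum
  rw [show H ν = (geomMean a b ν + geomMean b a ν) / 2 by rw [hHeinz]]
  constructor
  · linear_combination (lower_ab + lower_ba) / 2 + hsum
  · linear_combination (upper_ab + upper_ba) / 2 - hsum

theorem stmt15 (a b ν : ℝ) (ha : 0 < a) (hb : 0 < b) (hν : ν ∈ Set.Ioo (0:ℝ) 1)
    (n : ℕ) (hn : 1 ≤ n) (h : ℝ) (hh : h = b / a) (H : ℝ → ℝ)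
    (hH : H = (fun μ : ℝ => (a ^ (1 - μ) * b ^ μ + a ^ μ * b ^ (1 - μ)) / 2)) :
    Kc (h ^ ((1:ℝ)/2^n)) ^ rseq ν n * H ν ≤ (a + b) / 2 - (∑ k ∈ Finset.range n, rseq ν k * (H (mfl ν k / 2^k) - 2 * H ((2 * mfl ν k + 1) / 2^(k+1)) + H ((mfl ν k + 1) / 2^k))) ∧
    (a + b) / 2 - (∑ k ∈ Finset.range n, rseq ν k * (H (mfl ν k / 2^k) - 2 * H ((2 * mfl ν k + 1) / 2^(k+1)) + H ((mfl ν k + 1) / 2^k))) ≤ Kc (h ^ ((1:ℝ)/2^n)) ^ (1 - rseq ν n) * H ν :=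
  stmt15_general a b ν ha hb hν n h hh H hH
end
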